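/- Let X be a closed Vec-subvariety of a polynomial functor P, let V ∈ Vec, and let U1, U2 be linear subspaces of V. Then X(U1 ∩ U2) = X(U1) ×_{X(V)} X(U2) = X(U1) ×_{P(V)} P(U2) = P(U1) ×_{P(V)} X(U2), where all fibre products are taken with respect to the closed embeddings induced by the inclusions U1, U2 ⊆ V and X ⊆ P. -/

import Mathlib

open CategoryTheory

noncomputable section

variable (K : Type) [Field K]

/-- The coordinate ring of the affine space associated to a finite-dimensional
vector space `W`: a polynomial ring on a basis of `W`, i.e. the symmetric algebra
on the dual of `W`. -/
abbrev coordRing (W : Type) [AddCommGroup W] [Module K W] : Type :=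
  MvPolynomial (Fin (Module.finrank K W)) K

/-- Evaluation of a "polynomial function on `W`" at a point `w : W`. -/
def evalAt {W : Type} [AddCommGroup W] [Module K W] [FiniteDimensional K W]
    (w : W) : coordRing K W →+* K :=
  MvPolynomial.eval (fun i => (Module.finBasis K W).repr w i)

/-- `g` is the ring homomorphism between coordinate rings induced by the
(polynomial) map `f`. -/
def IsEvalCompat {W₁ W₂ : Type} [AddCommGroup W₁] [Module K W₁] [FiniteDimensional K W₁]
    [AddCommGroup W₂] [Module K W₂] [FiniteDimensional K W₂]
    (g : coordRing K W₂ →+* coordRing K W₁) (f : W₁ → W₂) : Prop :=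
  ∀ (p : coordRing K W₂) (w : W₁), evalAt K w (g p) = evalAt K (f w) p

/-- The ring homomorphism between coordinate rings induced by a polynomial map
`f : W₁ → W₂` (pullback of polynomial functions along `f`).  Since `K` is
infinite, such a ring homomorphism is unique if it exists; it exists whenever
`f` is a polynomial map. -/
def polyComap {W₁ W₂ : Type} [AddCommGroup W₁] [Module K W₁] [FiniteDimensional K W₁]
    [AddCommGroup W₂] [Module K W₂] [FiniteDimensional K W₂]
    (f : W₁ → W₂) : coordRing K W₂ →+* coordRing K W₁ :=
  letI := Classical.propDecidable
  if h : ∃ g, IsEvalCompat K g f then h.choose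
  else (MvPolynomial.C : K →+* coordRing K W₁).comp MvPolynomial.constantCoeff

/-- `f : V → W` is a polynomial map of degree at most `d`: in (any) coordinates,
`f` is given by polynomials of total degree at most `d`. -/
def IsPolynomialMap {V W : Type} [AddCommGroup V] [Module K V]
    [AddCommGroup W] [Module K W] (d : ℕ) (f : V → W) : Prop :=
  ∃ (n m : ℕ) (eV : (Fin n → K) ≃ₗ[K] V) (eW : W ≃ₗ[K] (Fin m → K))
    (p : Fin m → MvPolynomial (Fin n) K),
    (∀ i, (p i).totalDegree ≤ d) ∧
    ∀ x : Fin n → K, eW (f (eV x)) = fun i => MvPolynomial.eval x (p i)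

/-- A polynomial functor `P` on the category `Vec` of finite-dimensional
`K`-vector spaces: a functor such that all the maps
`Hom(U,V) → Hom(P(U),P(V))` are polynomial of degree bounded by `deg`. -/
structure PolyFunctor (K : Type) [Field K] where
  obj : FGModuleCat K → FGModuleCat K
  map : ∀ {U V : FGModuleCat K}, (U →ₗ[K] V) → (obj U →ₗ[K] obj V)
  map_id : ∀ U : FGModuleCat K, map (LinearMap.id (M := U)) = LinearMap.id
  map_comp : ∀ {U V W : FGModuleCat K} (φ : U →ₗ[K] V) (ψ : V →ₗ[K] W),
    map (ψ ∘ₗ φ) = map ψ ∘ₗ map φ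
  deg : ℕ
  map_poly : ∀ U V : FGModuleCat K,
    IsPolynomialMap K deg (fun φ : U →ₗ[K] V => (map φ : obj U →ₗ[K] obj V))

/-- A (closed) `Vec`-variety `X` inside the polynomial functor `P`: for every
finite-dimensional `V`, a reduced closed subscheme `X(V) ⊆ P(V)` (given by its
radical vanishing ideal in the coordinate ring of `P(V)`), such that
`P(φ)` maps `X(U)` into `X(V)` for every linear map `φ : U → V`. -/
structure VecVariety (K : Type) [Field K] (P : PolyFunctor K) where
  ideal : ∀ V : FGModuleCat K, Ideal (coordRing K (P.obj V))
  isRadical : ∀ V, (ideal V).IsRadical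
  mapsInto : ∀ {U V : FGModuleCat K} (φ : U →ₗ[K] V),
    ∀ f ∈ ideal V, polyComap K (fun u : P.obj U => P.map φ u) f ∈ ideal U

variable {K} {P : PolyFunctor K}

/-- A local ring is regular if it is Noetherian and its Krull dimension equals
the dimension of its cotangent space (equivalently, its maximal ideal is
generated by a regular system of parameters). -/
def IsRegularLocal (R : Type) [CommRing R] [IsLocalRing R] : Prop :=
  IsNoetherianRing R ∧
    ringKrullDim R =
      (Module.finrank (IsLocalRing.ResidueField R) (IsLocalRing.CotangentSpace R) : WithBot (WithTop ℕ))

/-- The underlying closed subset `X(V)` of the spectrum of the ambient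
coordinate ring. -/
def VecVariety.zeroSet (X : VecVariety K P) (V : FGModuleCat K) :
    Set (PrimeSpectrum (coordRing K (P.obj V))) :=
  PrimeSpectrum.zeroLocus (X.ideal V : Set (coordRing K (P.obj V)))

/-- The singular locus of the scheme `X(V) = Spec(K[P(V)]/I(X(V)))`, viewed
inside the spectrum of the ambient coordinate ring. -/
def VecVariety.singSet (X : VecVariety K P) (V : FGModuleCat K) :
    Set (PrimeSpectrum (coordRing K (P.obj V))) :=
  {p | ∃ q : PrimeSpectrum ((coordRing K (P.obj V)) ⧸ X.ideal V),
        PrimeSpectrum.comap (Ideal.Quotient.mk (X.ideal V)) q = p ∧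
        ¬ IsRegularLocal (Localization.AtPrime q.asIdeal)}

/-- `Y` is a closed `Vec`-subvariety of `X`. -/
def VecVariety.IsClosedSub (Y X : VecVariety K P) : Prop :=
  ∀ V, X.ideal V ≤ Y.ideal V

end
/-- The ring homomorphism `Γ(X(W)) → Γ(X(V))` corresponding to the morphism
`X(φ) : X(V) → X(W)`, i.e. the restriction of `P(φ)` to `X(V)`. -/
noncomputable def VecVariety.resMap {K : Type} [Field K] {P : PolyFunctor K} (X : VecVariety K P)
    {V W : FGModuleCat K} (φ : V →ₗ[K] W) :
    (coordRing K (P.obj W) ⧸ X.ideal W) →+* (coordRing K (P.obj V) ⧸ X.ideal V) :=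
  Ideal.quotientMap (X.ideal V) (polyComap K (fun x : P.obj V => P.map φ x))
    (fun _ hf => X.mapsInto φ _ hf)

/-!
Write `W = U₁ ∩ U₂`. A projection `π` of `V` onto `U₁` along a complement containing a complement
of `W` in `U₂` maps `U₂` into `W`, so on `U₂` it agrees with a projection `ρ` of `V` onto `W`.
Pulling polynomials back along `P(π)` and `P(ρ)` shows that the ideal of `X(W)` in `K[P(V)]` is
`I(P(U₁)) + I(P(U₂)) + I(X(V))`. All restriction maps `K[P(V)] → K[P(Uᵢ)] → K[P(W)]` are
surjective because the inclusions split, so each of the three squares of coordinate rings is a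
pushout of quotients of `K[P(V)]`, and `Spec` turns it into a pullback.
-/

section PolyComap

variable {K : Type} [Field K] {W₁ W₂ W₃ : Type}
  [AddCommGroup W₁] [Module K W₁] [FiniteDimensional K W₁]
  [AddCommGroup W₂] [Module K W₂] [FiniteDimensional K W₂]
  [AddCommGroup W₃] [Module K W₃] [FiniteDimensional K W₃]

/-- The witness substitutes for the `i`-th coordinate on `W₂` the linear form `w ↦ (f w)ᵢ`, read off
the matrix of `f`. -/
theorem exists_isEvalCompat_linearMap (f : W₁ →ₗ[K] W₂) : ∃ g, IsEvalCompat K g f := by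
  let M := LinearMap.toMatrix (Module.finBasis K W₁) (Module.finBasis K W₂) f
  refine ⟨(MvPolynomial.bind₁ fun i => ∑ j, MvPolynomial.C (M i j) * MvPolynomial.X j).toRingHom,
    fun p w => ?_⟩
  have hcoord := LinearMap.toMatrix_mulVec_repr (Module.finBasis K W₁) (Module.finBasis K W₂) f w
  simp only [evalAt, AlgHom.toRingHom_eq_coe, RingHom.coe_coe, ← MvPolynomial.coe_aeval_eq_eval,
    MvPolynomial.aeval_bind₁, ← hcoord]
  congr 1
  ext i
  simp [M, Matrix.mulVec, dotProduct, mul_comm]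

theorem IsEvalCompat.unique [Infinite K] {f : W₁ → W₂}
    {g₁ g₂ : coordRing K W₂ →+* coordRing K W₁} (h₁ : IsEvalCompat K g₁ f)
    (h₂ : IsEvalCompat K g₂ f) : g₁ = g₂ := by
  refine RingHom.ext fun p => MvPolynomial.funext fun x => ?_
  obtain ⟨w, rfl⟩ : ∃ w, (fun i => (Module.finBasis K W₁).repr w i) = x :=
    ⟨(Module.finBasis K W₁).equivFun.symm x, (Module.finBasis K W₁).equivFun.apply_symm_apply x⟩
  exact (h₁ p w).trans (h₂ p w).symm

theorem IsEvalCompat.comp {f₁ : W₁ → W₂} {f₂ : W₂ → W₃}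
    {g₁ : coordRing K W₂ →+* coordRing K W₁} {g₂ : coordRing K W₃ →+* coordRing K W₂}
    (h₁ : IsEvalCompat K g₁ f₁) (h₂ : IsEvalCompat K g₂ f₂) :
    IsEvalCompat K (g₁.comp g₂) (f₂ ∘ f₁) :=
  fun p w => (h₁ (g₂ p) w).trans (h₂ p (f₁ w))

theorem isEvalCompat_polyComap_linearMap (f : W₁ →ₗ[K] W₂) :
    IsEvalCompat K (polyComap K f) f := by
  rw [polyComap, dif_pos (exists_isEvalCompat_linearMap f)]
  exact (exists_isEvalCompat_linearMap f).choose_spec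

theorem polyComap_linearMap_comp [Infinite K] (f₁ : W₁ →ₗ[K] W₂) (f₂ : W₂ →ₗ[K] W₃) :
    polyComap K (f₂ ∘ₗ f₁) = (polyComap K f₁).comp (polyComap K f₂) :=
  (isEvalCompat_polyComap_linearMap _).unique
    ((isEvalCompat_polyComap_linearMap f₁).comp (isEvalCompat_polyComap_linearMap f₂))

theorem polyComap_linearMap_id [Infinite K] :
    polyComap K (LinearMap.id : W₁ →ₗ[K] W₁) = RingHom.id _ :=
  (isEvalCompat_polyComap_linearMap _).unique fun _ _ => rfl

end PolyComap

namespace PolyFunctor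

variable {K : Type} [Field K] (P : PolyFunctor K)

noncomputable def comap {U V : FGModuleCat K} (φ : U →ₗ[K] V) :
    coordRing K (P.obj V) →+* coordRing K (P.obj U) :=
  polyComap K (fun x : P.obj U => P.map φ x)

variable [Infinite K] {U V W : FGModuleCat K}

theorem comap_comp (φ : U →ₗ[K] V) (ψ : V →ₗ[K] W) :
    P.comap (ψ ∘ₗ φ) = (P.comap φ).comp (P.comap ψ) := by
  simp only [comap, P.map_comp]
  exact polyComap_linearMap_comp (P.map φ) (P.map ψ)

theorem comap_comp_apply (φ : U →ₗ[K] V) (ψ : V →ₗ[K] W) (x : coordRing K (P.obj W)) :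
    P.comap (ψ ∘ₗ φ) x = P.comap φ (P.comap ψ x) := by
  rw [comap_comp, RingHom.comp_apply]

theorem comap_id : P.comap (LinearMap.id : U →ₗ[K] U) = RingHom.id _ := by
  simp only [comap, P.map_id]
  exact polyComap_linearMap_id

theorem comap_surjective {φ : U →ₗ[K] V} (hφ : Function.Injective φ) :
    Function.Surjective (P.comap φ) := by
  obtain ⟨π, hπ⟩ := φ.exists_leftInverse_of_injective (LinearMap.ker_eq_bot.mpr hφ)
  refine fun y => ⟨P.comap π y, ?_⟩
  rw [← comap_comp_apply, hπ, comap_id, RingHom.id_apply]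

end PolyFunctor

/-- Project onto `U₁` along a complement of `U₁` that contains a complement of `U₁ ⊓ U₂` in `U₂`;
then `π` maps `U₂` into `U₁ ⊓ U₂`, so it agrees there with a retraction onto `U₁ ⊓ U₂`. -/
theorem Submodule.exists_retractions_eqOn {K V : Type} [Field K] [AddCommGroup V] [Module K V]
    (U₁ U₂ : Submodule K V) :
    ∃ (π : V →ₗ[K] U₁) (ρ : V →ₗ[K] ↥(U₁ ⊓ U₂)), π ∘ₗ U₁.subtype = LinearMap.id ∧
      Submodule.inclusion inf_le_left ∘ₗ ρ ∘ₗ U₂.subtype = π ∘ₗ U₂.subtype := by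
  obtain ⟨D, hWD, hWD_sup⟩ :=
    IsModularLattice.exists_disjoint_and_sup_eq (inf_le_right : U₁ ⊓ U₂ ≤ U₂)
  have hDU₁ : Disjoint D U₁ := by
    refine disjoint_iff_inf_le.mpr fun v ⟨hvD, hvU₁⟩ => hWD.le_bot ⟨⟨hvU₁, ?_⟩, hvD⟩
    exact hWD_sup ▸ Submodule.mem_sup_right hvD
  obtain ⟨C, hDC, hC⟩ := hDU₁.exists_isCompl
  let π := U₁.projectionOnto C hC.symm
  have hπ_mem : ∀ v ∈ U₂, (π v : V) ∈ U₁ ⊓ U₂ := by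
    intro v hv
    rw [← hWD_sup] at hv
    obtain ⟨w, hw, d, hd, rfl⟩ := Submodule.mem_sup.mp hv
    have hπw : π w = ⟨w, hw.1⟩ := Submodule.projectionOnto_apply_left hC.symm ⟨w, hw.1⟩
    have hπd : π d = 0 := Submodule.projectionOnto_apply_of_mem_right hC.symm (hDC hd)
    simpa [hπw, hπd] using hw
  obtain ⟨r, hr⟩ := LinearMap.exists_leftInverse_of_injective
    (Submodule.inclusion (inf_le_left : U₁ ⊓ U₂ ≤ U₁)) (Submodule.ker_inclusion _ _ _)
  refine ⟨π, r ∘ₗ π, ?_, ?_⟩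
  · ext u
    simp [π, Submodule.projectionOnto_apply_left]
  · ext v
    have hv : π v = Submodule.inclusion inf_le_left ⟨(π v : V), hπ_mem v v.2⟩ := rfl
    simp only [LinearMap.coe_comp, Function.comp_apply, Submodule.coe_subtype]
    rw [hv, ← LinearMap.comp_apply r, hr, LinearMap.id_apply]

universe u

theorem CommRingCat.isPushout_of_surjective {R A B C : Type u}
    [CommRing R] [CommRing A] [CommRing B] [CommRing C]
    {f : R →+* A} {g : R →+* B} {h : A →+* C} {k : B →+* C} (w : h.comp f = k.comp g)
    (hf : Function.Surjective f) (hg : Function.Surjective g) (hh : Function.Surjective h)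
    (hker : RingHom.ker (h.comp f) ≤ RingHom.ker f ⊔ RingHom.ker g) :
    IsPushout (ofHom f) (ofHom g) (ofHom h) (ofHom k) := by
  have hhf : Function.Surjective (h.comp f) := hh.comp hf
  have hcond (s : Limits.PushoutCocone (ofHom f) (ofHom g)) (x : R) :
      s.inl.hom (f x) = s.inr.hom (g x) :=
    congr($(s.condition).hom x)
  let desc (s : Limits.PushoutCocone (ofHom f) (ofHom g)) : C →+* s.pt :=
    (h.comp f).liftOfSurjective hhf ⟨s.inl.hom.comp f, hker.trans <| sup_le
      (fun x hx => by simp [(RingHom.mem_ker).mp hx])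
      (fun x hx => by simp [hcond s x, (RingHom.mem_ker).mp hx])⟩
  have desc_apply (s) (x : R) : desc s (h (f x)) = s.inl.hom (f x) :=
    (h.comp f).liftOfSurjective_comp_apply hhf _ x
  refine IsPushout.of_isColimit' ⟨by ext x; exact RingHom.congr_fun w x⟩
    (Limits.PushoutCocone.IsColimit.mk _ (fun s => ofHom (desc s)) (fun s => ?_) (fun s => ?_)
      (fun s m hm _ => ?_))
  · ext a
    obtain ⟨x, rfl⟩ := hf a
    exact desc_apply s x
  · ext b
    obtain ⟨x, rfl⟩ := hg b
    have hkg : k (g x) = h (f x) := (RingHom.congr_fun w x).symm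
    simpa [hkg, hcond] using desc_apply s x
  · ext c
    obtain ⟨x, rfl⟩ := hhf c
    simpa [desc_apply] using congr($(hm).hom (f x))

namespace VecVariety

variable {K : Type} [Field K] {P : PolyFunctor K} (X : VecVariety K P)

theorem resMap_mk {U V : FGModuleCat K} (φ : U →ₗ[K] V) (x : coordRing K (P.obj V)) :
    X.resMap φ (Ideal.Quotient.mk _ x) = Ideal.Quotient.mk _ (P.comap φ x) :=
  Ideal.quotientMap_mk

theorem ker_comap_sup_ideal_le {U V : FGModuleCat K} (φ : U →ₗ[K] V) :
    RingHom.ker (P.comap φ) ⊔ X.ideal V ≤ (X.ideal U).comap (P.comap φ) :=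
  sup_le (fun x hx => by simp [(RingHom.mem_ker).mp hx]) (X.mapsInto φ)

variable [Infinite K] {W U₁ U₂ V : FGModuleCat K}
  {a₁ : W →ₗ[K] U₁} {a₂ : W →ₗ[K] U₂} {c₁ : U₁ →ₗ[K] V} {c₂ : U₂ →ₗ[K] V}

/-- With `p = c₁ ∘ π` and `q = c₁ ∘ a₁ ∘ ρ`, write
`x = (x - x ∘ P(p)) + (x ∘ P(p) - x ∘ P(q)) + x ∘ P(q)`: the first term vanishes on `P(U₁)`,
the second on `P(U₂)` (as `p` and `q` agree on `U₂`), and the third lies in the ideal of `X(V)`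
because `q` factors through `W`. -/
theorem comap_ideal_le_ker_sup_ker_sup_ideal {π : V →ₗ[K] U₁} {ρ : V →ₗ[K] W}
    (hπ : π ∘ₗ c₁ = LinearMap.id) (hρ : a₁ ∘ₗ ρ ∘ₗ c₂ = π ∘ₗ c₂) :
    (X.ideal W).comap (P.comap (c₁ ∘ₗ a₁)) ≤
      RingHom.ker (P.comap c₁) ⊔ RingHom.ker (P.comap c₂) ⊔ X.ideal V := by
  intro x hx
  set p := c₁ ∘ₗ π
  set q := (c₁ ∘ₗ a₁) ∘ₗ ρ
  have hp : p ∘ₗ c₁ = c₁ := by rw [LinearMap.comp_assoc, hπ, LinearMap.comp_id]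
  have hpq : p ∘ₗ c₂ = q ∘ₗ c₂ := by
    simp only [p, q, LinearMap.comp_assoc, hρ]
  have h₁ : x - P.comap p x ∈ RingHom.ker (P.comap c₁) := by
    rw [RingHom.mem_ker, map_sub, ← P.comap_comp_apply, hp, sub_self]
  have h₂ : P.comap p x - P.comap q x ∈ RingHom.ker (P.comap c₂) := by
    rw [RingHom.mem_ker, map_sub, ← P.comap_comp_apply, ← P.comap_comp_apply, hpq, sub_self]
  have h₃ : P.comap q x ∈ X.ideal V := by
    rw [P.comap_comp_apply]
    exact X.mapsInto ρ _ hx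
  have hx_eq : x = (x - P.comap p x) + (P.comap p x - P.comap q x) + P.comap q x := by ring
  rw [hx_eq]
  exact Ideal.add_mem _ (Ideal.add_mem _ (Ideal.mem_sup_left (Ideal.mem_sup_left h₁))
    (Ideal.mem_sup_left (Ideal.mem_sup_right h₂))) (Ideal.mem_sup_right h₃)

theorem isPushout_quotient_comap (hsq : c₁ ∘ₗ a₁ = c₂ ∘ₗ a₂) (hc₁ : Function.Injective c₁)
    (hc₂ : Function.Injective c₂) (ha₁ : Function.Injective a₁)
    (hker : (X.ideal W).comap (P.comap (c₁ ∘ₗ a₁)) ≤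
      RingHom.ker (P.comap c₁) ⊔ RingHom.ker (P.comap c₂) ⊔ X.ideal V) :
    IsPushout (CommRingCat.ofHom ((Ideal.Quotient.mk (X.ideal U₁)).comp (P.comap c₁)))
      (CommRingCat.ofHom (P.comap c₂)) (CommRingCat.ofHom (X.resMap a₁))
      (CommRingCat.ofHom ((Ideal.Quotient.mk (X.ideal W)).comp (P.comap a₂))) := by
  refine CommRingCat.isPushout_of_surjective ?_
    (Ideal.Quotient.mk_surjective.comp (P.comap_surjective hc₁)) (P.comap_surjective hc₂)
    (Ideal.quotientMap_surjective (P.comap_surjective ha₁)) fun x hx => ?_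
  · refine RingHom.ext fun x => ?_
    simp [resMap_mk, ← P.comap_comp_apply, hsq]
  · have hx' : x ∈ (X.ideal W).comap (P.comap (c₁ ∘ₗ a₁)) := by
      simpa [resMap_mk, Ideal.Quotient.eq_zero_iff_mem, ← P.comap_comp_apply] using hx
    have hker₁ : RingHom.ker (P.comap c₁) ⊔ X.ideal V ≤
        RingHom.ker ((Ideal.Quotient.mk (X.ideal U₁)).comp (P.comap c₁)) := by
      rw [← RingHom.comap_ker, Ideal.mk_ker]
      exact X.ker_comap_sup_ideal_le c₁
    refine sup_le_sup_right hker₁ _ ?_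
    rw [sup_right_comm]
    exact hker hx'

theorem isPushout_resMap (hsq : c₁ ∘ₗ a₁ = c₂ ∘ₗ a₂) (hc₁ : Function.Injective c₁)
    (hc₂ : Function.Injective c₂) (ha₁ : Function.Injective a₁)
    (hker : (X.ideal W).comap (P.comap (c₁ ∘ₗ a₁)) ≤
      RingHom.ker (P.comap c₁) ⊔ RingHom.ker (P.comap c₂) ⊔ X.ideal V) :
    IsPushout (CommRingCat.ofHom (X.resMap c₁)) (CommRingCat.ofHom (X.resMap c₂))
      (CommRingCat.ofHom (X.resMap a₁)) (CommRingCat.ofHom (X.resMap a₂)) := by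
  refine CommRingCat.isPushout_of_surjective ?_
    (Ideal.quotientMap_surjective (P.comap_surjective hc₁))
    (Ideal.quotientMap_surjective (P.comap_surjective hc₂))
    (Ideal.quotientMap_surjective (P.comap_surjective ha₁)) fun x hx => ?_
  · refine RingHom.ext fun x => ?_
    obtain ⟨x, rfl⟩ := Ideal.Quotient.mk_surjective x
    simp [resMap_mk, ← P.comap_comp_apply, hsq]
  · obtain ⟨x, rfl⟩ := Ideal.Quotient.mk_surjective x
    have hx' : x ∈ (X.ideal W).comap (P.comap (c₁ ∘ₗ a₁)) := by
      simpa [resMap_mk, Ideal.Quotient.eq_zero_iff_mem, ← P.comap_comp_apply] using hx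
    obtain ⟨_, hyz, v, hv, rfl⟩ := Submodule.mem_sup.mp (hker hx')
    obtain ⟨y, hy, z, hz, rfl⟩ := Submodule.mem_sup.mp hyz
    rw [map_add, Ideal.Quotient.eq_zero_iff_mem.mpr hv, add_zero, map_add]
    exact Submodule.add_mem_sup (by simp [resMap_mk, (RingHom.mem_ker).mp hy])
      (by simp [resMap_mk, (RingHom.mem_ker).mp hz])

end VecVariety

open AlgebraicGeometry in
/-- For subspaces `U₁, U₂` of `V`:
`X(U₁ ∩ U₂) = X(U₁) ×_{X(V)} X(U₂) = X(U₁) ×_{P(V)} P(U₂) = P(U₁) ×_{P(V)} X(U₂)`. -/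
theorem VecVariety_intersection_is_fibre_product
    (K : Type) [Field K] [CharZero K] (P : PolyFunctor K) (X : VecVariety K P)
    (V : FGModuleCat K) (U₁ U₂ : Submodule K V) :
    -- `X(U₁ ∩ U₂) = X(U₁) ×_{X(V)} X(U₂)`
    IsPullback
      (Spec.map (CommRingCat.ofHom (X.resMap (V := FGModuleCat.of K ↥(U₁ ⊓ U₂))
        (W := FGModuleCat.of K U₁) (Submodule.inclusion inf_le_left))))
      (Spec.map (CommRingCat.ofHom (X.resMap (V := FGModuleCat.of K ↥(U₁ ⊓ U₂))
        (W := FGModuleCat.of K U₂) (Submodule.inclusion inf_le_right))))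
      (Spec.map (CommRingCat.ofHom (X.resMap (V := FGModuleCat.of K U₁) (U₁.subtype))))
      (Spec.map (CommRingCat.ofHom (X.resMap (V := FGModuleCat.of K U₂) (U₂.subtype)))) ∧
    -- `X(U₁ ∩ U₂) = X(U₁) ×_{P(V)} P(U₂)`
    IsPullback
      (Spec.map (CommRingCat.ofHom (X.resMap (V := FGModuleCat.of K ↥(U₁ ⊓ U₂))
        (W := FGModuleCat.of K U₁) (Submodule.inclusion inf_le_left))))
      (Spec.map (CommRingCat.ofHom (Ideal.Quotient.mk (X.ideal (FGModuleCat.of K ↥(U₁ ⊓ U₂))))) ≫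
        Spec.map (CommRingCat.ofHom (polyComap K
          (fun x : P.obj (FGModuleCat.of K ↥(U₁ ⊓ U₂)) =>
            P.map (V := FGModuleCat.of K U₂) (Submodule.inclusion inf_le_right) x))))
      (Spec.map (CommRingCat.ofHom (Ideal.Quotient.mk (X.ideal (FGModuleCat.of K U₁)))) ≫
        Spec.map (CommRingCat.ofHom (polyComap K
          (fun x : P.obj (FGModuleCat.of K U₁) => P.map (U₁.subtype) x))))
      (Spec.map (CommRingCat.ofHom (polyComap K
        (fun x : P.obj (FGModuleCat.of K U₂) => P.map (U₂.subtype) x)))) ∧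
    -- `X(U₁ ∩ U₂) = P(U₁) ×_{P(V)} X(U₂)`
    IsPullback
      (Spec.map (CommRingCat.ofHom (Ideal.Quotient.mk (X.ideal (FGModuleCat.of K ↥(U₁ ⊓ U₂))))) ≫
        Spec.map (CommRingCat.ofHom (polyComap K
          (fun x : P.obj (FGModuleCat.of K ↥(U₁ ⊓ U₂)) =>
            P.map (V := FGModuleCat.of K U₁) (Submodule.inclusion inf_le_left) x))))
      (Spec.map (CommRingCat.ofHom (X.resMap (V := FGModuleCat.of K ↥(U₁ ⊓ U₂))
        (W := FGModuleCat.of K U₂) (Submodule.inclusion inf_le_right))))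
      (Spec.map (CommRingCat.ofHom (polyComap K
        (fun x : P.obj (FGModuleCat.of K U₁) => P.map (U₁.subtype) x))))
      (Spec.map (CommRingCat.ofHom (Ideal.Quotient.mk (X.ideal (FGModuleCat.of K U₂)))) ≫
        Spec.map (CommRingCat.ofHom (polyComap K
          (fun x : P.obj (FGModuleCat.of K U₂) => P.map (U₂.subtype) x)))) := by
  obtain ⟨π, ρ, hπ, hρ⟩ := U₁.exists_retractions_eqOn U₂
  have hsq : U₁.subtype ∘ₗ Submodule.inclusion inf_le_left =
      U₂.subtype ∘ₗ Submodule.inclusion (inf_le_right : U₁ ⊓ U₂ ≤ U₂) := rfl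
  have hker := X.comap_ideal_le_ker_sup_ker_sup_ideal (W := FGModuleCat.of K ↥(U₁ ⊓ U₂))
    (U₁ := FGModuleCat.of K U₁) (U₂ := FGModuleCat.of K U₂) hπ hρ
  have hker' := hker
  rw [hsq, sup_comm (RingHom.ker _)] at hker'
  have hU₁ := U₁.injective_subtype
  have hU₂ := U₂.injective_subtype
  refine ⟨isPullback_SpecMap_of_isPushout _ _ _ _
    (X.isPushout_resMap hsq hU₁ hU₂ (Submodule.inclusion_injective _) hker), ?_, ?_⟩ <;>
    simp only [← Spec.map_comp, ← CommRingCat.ofHom_comp]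
  · exact isPullback_SpecMap_of_isPushout _ _ _ _
      (X.isPushout_quotient_comap hsq hU₁ hU₂ (Submodule.inclusion_injective _) hker)
  · exact isPullback_SpecMap_of_isPushout _ _ _ _
      (X.isPushout_quotient_comap (W := FGModuleCat.of K ↥(U₁ ⊓ U₂)) (U₁ := FGModuleCat.of K U₂)
        (U₂ := FGModuleCat.of K U₁) hsq.symm hU₂ hU₁ (Submodule.inclusion_injective _) hker').flip
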